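/- For every k ∈ ℤ∖{0} and m,n ∈ ℤ, the assignment g ↦ π_k^{m,n}(g) is a unitary representation of G̃ on functions on ℝ²: (i) π_k^{m,n}((0,0,0,0,0))f = f and π_k^{m,n}(g₁⋆g₂)f = π_k^{m,n}(g₁)(π_k^{m,n}(g₂)f) for all g₁,g₂ ∈ ℝ⁵ and all f : ℝ² → ℂ; (ii) for every g ∈ ℝ⁵ and every measurable f : ℝ² → ℂ, ∫_{ℝ²} |(π_k^{m,n}(g)f)(x,t)|² dx dt = ∫_{ℝ²} |f(x,t)|² dx dt (with both sides possibly +∞), so each π_k^{m,n}(g) preserves the L²(ℝ²) norm. -/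

import Mathlib

/-! `π_k^{m,n}(g)` translates the argument by `(a, r)` and multiplies by a unimodular phase
`e^{iφ_g}`. The representation property is the cocycle identity
`φ_{g₁⋆g₂}(p) = φ_{g₁}(p) + φ_{g₂}(p + (a₁, r₁))`, a polynomial identity, and unitarity is the
translation invariance of Lebesgue measure on `ℝ²`. -/

noncomputable section

open MeasureTheory

/-- The underlying set `ℝ⁵` of the group `G̃`. -/
abbrev G5 : Type := ℝ × ℝ × ℝ × ℝ × ℝ

/-- Multiplication on `G̃`. -/
def gtmul (g₁ g₂ : G5) : G5 :=
  (g₁.1 + g₂.1, g₁.2.1 + g₂.2.1, g₁.2.2.1 + g₂.2.2.1 - g₁.2.1 * g₂.1,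
   g₁.2.2.2.1 + g₂.2.2.2.1,
   g₁.2.2.2.2 + g₂.2.2.2.2 + g₁.2.2.1 * g₂.1 - (1 / 2) * g₁.2.1 * g₂.1 ^ 2
     + g₁.2.2.2.1 * g₂.2.1)

/-- The representation `π_k^{m,n}`: for `g = (a,b,c,r,v)`,
`(π_k^{m,n}(g)f)(x,t) = e^{−4πik(v+bt−c(x+a)−abx−(b/2)(x²+a²))}
  · e^{−2πi(mb−n(c+b(x+a)))} · f(x+a, t+r)`. -/
def pirep (k m n : ℤ) (g : G5) (f : ℝ × ℝ → ℂ) : ℝ × ℝ → ℂ := fun p =>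
  Complex.exp (Complex.I *
      ((-4) * Real.pi * (k : ℝ) *
        (g.2.2.2.2 + g.2.1 * p.2 - g.2.2.1 * (p.1 + g.1) - g.1 * g.2.1 * p.1 -
          (g.2.1 / 2) * (p.1 ^ 2 + g.1 ^ 2)) : ℝ)) *
    Complex.exp (Complex.I *
      ((-2) * Real.pi *
        ((m : ℝ) * g.2.1 - (n : ℝ) * (g.2.2.1 + g.2.1 * (p.1 + g.1))) : ℝ)) *
    f (p.1 + g.1, p.2 + g.2.2.2.1)

open scoped ENNReal

def pirepShift (g : G5) : ℝ × ℝ := (g.1, g.2.2.2.1)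

def pirepPhase (k m n : ℤ) (g : G5) (p : ℝ × ℝ) : ℝ :=
  (-4) * Real.pi * k *
      (g.2.2.2.2 + g.2.1 * p.2 - g.2.2.1 * (p.1 + g.1) - g.1 * g.2.1 * p.1 -
        (g.2.1 / 2) * (p.1 ^ 2 + g.1 ^ 2)) +
    (-2) * Real.pi * (m * g.2.1 - n * (g.2.2.1 + g.2.1 * (p.1 + g.1)))

section

variable (k m n : ℤ)

theorem pirep_apply (g : G5) (f : ℝ × ℝ → ℂ) (p : ℝ × ℝ) :
    pirep k m n g f p =
      Complex.exp (pirepPhase k m n g p * Complex.I) * f (p + pirepShift g) := by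
  simp only [pirep, pirepPhase, pirepShift, ← Complex.exp_add]
  congr 2
  push_cast
  ring

theorem pirepShift_gtmul (g₁ g₂ : G5) :
    pirepShift (gtmul g₁ g₂) = pirepShift g₁ + pirepShift g₂ := rfl

theorem pirepPhase_gtmul (g₁ g₂ : G5) (p : ℝ × ℝ) :
    pirepPhase k m n (gtmul g₁ g₂) p =
      pirepPhase k m n g₁ p + pirepPhase k m n g₂ (p + pirepShift g₁) := by
  simp only [pirepPhase, pirepShift, gtmul, Prod.fst_add, Prod.snd_add]
  ring

theorem pirep_zero (f : ℝ × ℝ → ℂ) : pirep k m n 0 f = f := by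
  funext p
  simp [pirep]

theorem pirep_gtmul (g₁ g₂ : G5) (f : ℝ × ℝ → ℂ) :
    pirep k m n (gtmul g₁ g₂) f = pirep k m n g₁ (pirep k m n g₂ f) := by
  funext p
  simp only [pirep_apply, pirepPhase_gtmul, pirepShift_gtmul, add_assoc, Complex.ofReal_add,
    add_mul, Complex.exp_add]
  ring

theorem nnnorm_pirep_apply (g : G5) (f : ℝ × ℝ → ℂ) (p : ℝ × ℝ) :
    ‖pirep k m n g f p‖₊ = ‖f (p + pirepShift g)‖₊ := by
  rw [pirep_apply, nnnorm_mul, Complex.nnnorm_exp_ofReal_mul_I, one_mul]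

theorem lintegral_nnnorm_pirep_pow (g : G5) (f : ℝ × ℝ → ℂ) (q : ℕ) :
    ∫⁻ p, (‖pirep k m n g f p‖₊ : ℝ≥0∞) ^ q = ∫⁻ p, (‖f p‖₊ : ℝ≥0∞) ^ q := by
  simp_rw [nnnorm_pirep_apply]
  exact lintegral_add_right_eq_self (fun p => (‖f p‖₊ : ℝ≥0∞) ^ q) (pirepShift g)

end

theorem stmt11_general (k m n : ℤ) :
    (∀ f : ℝ × ℝ → ℂ,
      pirep k m n ((0 : ℝ), (0 : ℝ), (0 : ℝ), (0 : ℝ), (0 : ℝ)) f = f) ∧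
    (∀ g₁ g₂ : G5, ∀ f : ℝ × ℝ → ℂ,
      pirep k m n (gtmul g₁ g₂) f = pirep k m n g₁ (pirep k m n g₂ f)) ∧
    (∀ g : G5, ∀ f : ℝ × ℝ → ℂ, Measurable f →
      ∫⁻ p : ℝ × ℝ, (‖pirep k m n g f p‖₊ : ENNReal) ^ 2 =
        ∫⁻ p : ℝ × ℝ, (‖f p‖₊ : ENNReal) ^ 2) :=
  ⟨pirep_zero k m n, pirep_gtmul k m n,
    fun g f _ => lintegral_nnnorm_pirep_pow k m n g f 2⟩

/-- `π_k^{m,n}` is a unitary representation of `G̃` on functions on `ℝ²`: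
it sends the identity to the identity, intertwines `⋆` with composition,
and each `π_k^{m,n}(g)` preserves the `L²(ℝ²)` norm. -/
theorem stmt11 (k m n : ℤ) (hk : k ≠ 0) :
    (∀ f : ℝ × ℝ → ℂ,
      pirep k m n ((0 : ℝ), (0 : ℝ), (0 : ℝ), (0 : ℝ), (0 : ℝ)) f = f) ∧
    (∀ g₁ g₂ : G5, ∀ f : ℝ × ℝ → ℂ,
      pirep k m n (gtmul g₁ g₂) f = pirep k m n g₁ (pirep k m n g₂ f)) ∧
    (∀ g : G5, ∀ f : ℝ × ℝ → ℂ, Measurable f →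
      ∫⁻ p : ℝ × ℝ, (‖pirep k m n g f p‖₊ : ENNReal) ^ 2 =
        ∫⁻ p : ℝ × ℝ, (‖f p‖₊ : ENNReal) ^ 2) :=
  stmt11_general k m n

end
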